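/- Under the SAMP(γ) marginals with γ ∈ [0,1], let H_i := min(1, ∑_{t=1}^T ∑_{f∈F_i} W_{f,t}) be the number of successful assignments involving offline agent i and H := ∑_{i∈I} H_i the total number of successful assignments. Then each H_i is {0,1}-valued with E[H_i] = 1 − ∏_{t=1}^T (1 − γ ∑_{f∈F_i} x_{f,t} p_{f,t}) ≤ γ, and Var[H] ≤ γ̄(1−γ̄)·|I|, where γ̄ := min(1/2, γ). (Theorem: variance analysis of SAMP(γ); here |I| = B is the total matching capacity.) -/

import Mathlib

/-!
Let `Sᵢ := ∏ₜ ∏_{f ∈ Fᵢ} (1 - W t f)` be the indicator that no assignment of agent `i` ever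
succeeds, so that `Hᵢ = 1 - Sᵢ`. Since at most one assignment succeeds per round,
`E ∏_{f ∈ s} (1 - W t f) = 1 - ∑_{f ∈ s} P(W t f = 1)`, and independence of the rounds turns
`E Sᵢ` into a product over rounds. For `i ≠ j` the sets `Fᵢ`, `Fⱼ` are disjoint, so
`Sᵢ Sⱼ = S_{Fᵢ ∪ Fⱼ}`, and `∏ₜ (1 - aₜ - bₜ) ≤ ∏ₜ (1 - aₜ) ∏ₜ (1 - bₜ)` makes every covariance
`cov(Hᵢ, Hⱼ) = cov(Sᵢ, Sⱼ)` nonpositive. Hence `Var H ≤ ∑ᵢ Var Hᵢ = ∑ᵢ qᵢ (1 - qᵢ)` with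
`qᵢ = E Hᵢ ≤ E ∑ₜ ∑_{f ∈ Fᵢ} W t f ≤ γ`, and `q (1 - q) ≤ γ̄ (1 - γ̄)` whenever `q ≤ γ`.
-/

open MeasureTheory ProbabilityTheory Finset

lemma min_one_sum_eq_ite {α : Type*} {s : Finset α} {w : α → ℝ}
    (hw : ∀ a ∈ s, w a = 0 ∨ w a = 1) :
    min 1 (∑ a ∈ s, w a) = if ∃ a ∈ s, w a = 1 then 1 else 0 := by
  split_ifs with h
  · obtain ⟨a, ha, ha1⟩ := h
    refine min_eq_left (ha1 ▸ single_le_sum (fun b hb => ?_) ha)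
    rcases hw b hb with hb | hb <;> simp [hb]
  · push Not at h
    rw [sum_eq_zero fun a ha => (hw a ha).resolve_right (h a ha)]
    simp

lemma min_one_sum_eq_zero_or_one {α : Type*} {s : Finset α} {w : α → ℝ}
    (hw : ∀ a ∈ s, w a = 0 ∨ w a = 1) :
    min 1 (∑ a ∈ s, w a) = 0 ∨ min 1 (∑ a ∈ s, w a) = 1 := by
  rw [min_one_sum_eq_ite hw]
  split_ifs <;> simp

lemma one_sub_min_one_sum_eq_prod_one_sub {α : Type*} {s : Finset α} {w : α → ℝ}
    (hw : ∀ a ∈ s, w a = 0 ∨ w a = 1) :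
    1 - min 1 (∑ a ∈ s, w a) = ∏ a ∈ s, (1 - w a) := by
  rw [min_one_sum_eq_ite hw]
  split_ifs with h
  · obtain ⟨a, ha, ha1⟩ := h
    rw [sub_self, prod_eq_zero ha (by rw [ha1, sub_self])]
  · push Not at h
    rw [prod_eq_one fun a ha => by rw [(hw a ha).resolve_right (h a ha), sub_zero], sub_zero]

lemma prod_one_sub_add_le_prod_mul_prod {κ : Type*} (s : Finset κ) {a b : κ → ℝ}
    (ha : ∀ t ∈ s, 0 ≤ a t) (hb : ∀ t ∈ s, 0 ≤ b t) (hab : ∀ t ∈ s, a t + b t ≤ 1) :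
    ∏ t ∈ s, (1 - (a t + b t)) ≤ (∏ t ∈ s, (1 - a t)) * ∏ t ∈ s, (1 - b t) := by
  rw [← prod_mul_distrib]
  refine prod_le_prod (fun t ht => by linarith [hab t ht]) fun t ht => ?_
  nlinarith [mul_nonneg (ha t ht) (hb t ht)]

lemma mul_one_sub_le_min_half (q γ : ℝ) (hqγ : q ≤ γ) :
    q * (1 - q) ≤ min (1 / 2) γ * (1 - min (1 / 2) γ) := by
  rcases le_total γ (1 / 2) with h | h
  · rw [min_eq_right h]; nlinarith
  · rw [min_eq_left h]; nlinarith [sq_nonneg (q - 1 / 2)]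

section ZeroOne

variable {Ω : Type*} [MeasurableSpace Ω] {μ : Measure Ω}

lemma memLp_of_zero_or_one [IsFiniteMeasure μ] {X : Ω → ℝ} (hX : Measurable X)
    (h01 : ∀ ω, X ω = 0 ∨ X ω = 1) (p : ENNReal) : MemLp X p μ :=
  MemLp.of_bound hX.aestronglyMeasurable 1 <| .of_forall fun ω => by
    rcases h01 ω with h | h <;> simp [h]

lemma integrable_of_zero_or_one [IsFiniteMeasure μ] {X : Ω → ℝ} (hX : Measurable X)
    (h01 : ∀ ω, X ω = 0 ∨ X ω = 1) : Integrable X μ :=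
  (memLp_of_zero_or_one hX h01 1).integrable le_rfl

lemma integral_eq_measureReal_of_zero_or_one {X : Ω → ℝ} (hX : Measurable X)
    (h01 : ∀ ω, X ω = 0 ∨ X ω = 1) : ∫ ω, X ω ∂μ = μ.real {ω | X ω = 1} := by
  have hind : X = {ω | X ω = 1}.indicator 1 := by
    ext ω
    rcases h01 ω with h | h <;> simp [Set.indicator, h]
  conv_lhs => rw [hind]
  exact integral_indicator_one (hX (measurableSet_singleton 1))

lemma variance_of_zero_or_one [IsProbabilityMeasure μ] {X : Ω → ℝ} (hX : Measurable X)
    (h01 : ∀ ω, X ω = 0 ∨ X ω = 1) : Var[X; μ] = μ[X] * (1 - μ[X]) := by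
  have hsq : X ^ 2 = X := by
    ext ω
    rcases h01 ω with h | h <;> simp [h]
  rw [variance_eq_sub (memLp_of_zero_or_one hX h01 2), hsq]
  ring

end ZeroOne

lemma variance_sum_le_sum_variance {Ω ι : Type*} [MeasurableSpace Ω] {μ : Measure Ω}
    [IsFiniteMeasure μ] [Fintype ι] {X : ι → Ω → ℝ} (hX : ∀ i, MemLp (X i) 2 μ)
    (hcov : Pairwise fun i j => cov[X i, X j; μ] ≤ 0) :
    Var[fun ω => ∑ i, X i ω; μ] ≤ ∑ i, Var[X i; μ] := by
  classical
  rw [variance_fun_sum hX]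
  refine sum_le_sum fun i _ => ?_
  rw [← add_sum_erase _ _ (mem_univ i), covariance_self (hX i).aemeasurable]
  exact add_le_of_nonpos_right (sum_nonpos fun j hj => hcov (ne_of_mem_erase hj).symm)

section RoundProcess

variable {Ω κ F : Type*} [Fintype κ] {W : κ → F → Ω → ℝ}

def noSuccess (W : κ → F → Ω → ℝ) (s : Finset F) (ω : Ω) : ℝ :=
  ∏ t, ∏ f ∈ s, (1 - W t f ω)

lemma min_one_sum_sum_eq_one_sub_noSuccess (h01 : ∀ t f ω, W t f ω = 0 ∨ W t f ω = 1)
    (s : Finset F) (ω : Ω) :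
    min 1 (∑ t, ∑ f ∈ s, W t f ω) = 1 - noSuccess W s ω := by
  rw [noSuccess, ← sum_product', ← prod_product',
    ← one_sub_min_one_sum_eq_prod_one_sub fun q _ => h01 q.1 q.2 ω, sub_sub_cancel]

lemma noSuccess_eq_zero_or_one (h01 : ∀ t f ω, W t f ω = 0 ∨ W t f ω = 1)
    (s : Finset F) (ω : Ω) : noSuccess W s ω = 0 ∨ noSuccess W s ω = 1 := by
  have h := min_one_sum_eq_zero_or_one (s := univ ×ˢ s) (w := fun q => W q.1 q.2 ω)
    fun q _ => h01 q.1 q.2 ω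
  rw [sum_product' (f := fun t f => W t f ω), min_one_sum_sum_eq_one_sub_noSuccess h01] at h
  rcases h with h | h <;> [right; left] <;> linarith

lemma noSuccess_union [DecidableEq F] {s s' : Finset F} (h : Disjoint s s') (ω : Ω) :
    noSuccess W (s ∪ s') ω = noSuccess W s ω * noSuccess W s' ω := by
  simp only [noSuccess, prod_union h, prod_mul_distrib]

variable [MeasurableSpace Ω] {μ : Measure Ω} [IsProbabilityMeasure μ]

lemma integral_prod_one_sub_of_sum_le_one [Fintype F] {w : F → Ω → ℝ}
    (hmeas : ∀ f, Measurable (w f)) (h01 : ∀ f ω, w f ω = 0 ∨ w f ω = 1)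
    (hone : ∀ᵐ ω ∂μ, ∑ f, w f ω ≤ 1) (s : Finset F) :
    ∫ ω, ∏ f ∈ s, (1 - w f ω) ∂μ = 1 - ∑ f ∈ s, μ.real {ω | w f ω = 1} := by
  have hae : (fun ω => ∏ f ∈ s, (1 - w f ω)) =ᵐ[μ] fun ω => 1 - ∑ f ∈ s, w f ω := by
    filter_upwards [hone] with ω hω
    have hle : ∑ f ∈ s, w f ω ≤ 1 :=
      (sum_le_sum_of_subset_of_nonneg (subset_univ s) fun f _ _ => by
        rcases h01 f ω with h | h <;> simp [h]).trans hω
    rw [← one_sub_min_one_sum_eq_prod_one_sub fun f _ => h01 f ω, min_eq_right hle]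
  have hint : ∀ f, Integrable (w f) μ := fun f => integrable_of_zero_or_one (hmeas f) (h01 f)
  rw [integral_congr_ae hae, integral_sub (integrable_const 1) (integrable_finsetSum s
    fun f _ => hint f), integral_finsetSum s fun f _ => hint f]
  simp only [integral_const, probReal_univ, one_smul]
  congr 1
  exact sum_congr rfl fun f _ => integral_eq_measureReal_of_zero_or_one (hmeas f) (h01 f)

lemma sum_measureReal_le_one_of_sum_le_one [Fintype F] {w : F → Ω → ℝ}
    (hmeas : ∀ f, Measurable (w f)) (h01 : ∀ f ω, w f ω = 0 ∨ w f ω = 1)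
    (hone : ∀ᵐ ω ∂μ, ∑ f, w f ω ≤ 1) (s : Finset F) :
    ∑ f ∈ s, μ.real {ω | w f ω = 1} ≤ 1 := by
  have hnonneg : 0 ≤ ∫ ω, ∏ f ∈ s, (1 - w f ω) ∂μ :=
    integral_nonneg fun ω => prod_nonneg fun f _ => by rcases h01 f ω with h | h <;> simp [h]
  rw [integral_prod_one_sub_of_sum_le_one hmeas h01 hone] at hnonneg
  linarith

lemma measurable_noSuccess (hmeas : ∀ t f, Measurable (W t f)) (s : Finset F) :
    Measurable (noSuccess W s) := by
  unfold noSuccess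
  fun_prop

lemma integrable_noSuccess (hmeas : ∀ t f, Measurable (W t f))
    (h01 : ∀ t f ω, W t f ω = 0 ∨ W t f ω = 1) (s : Finset F) :
    Integrable (noSuccess W s) μ :=
  integrable_of_zero_or_one (measurable_noSuccess hmeas s) (noSuccess_eq_zero_or_one h01 s)

lemma integral_min_one_sum_sum_le (hmeas : ∀ t f, Measurable (W t f))
    (h01 : ∀ t f ω, W t f ω = 0 ∨ W t f ω = 1) (s : Finset F) :
    ∫ ω, min 1 (∑ t, ∑ f ∈ s, W t f ω) ∂μ ≤ ∑ t, ∑ f ∈ s, μ.real {ω | W t f ω = 1} := by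
  have hint : ∀ t f, Integrable (W t f) μ := fun t f =>
    integrable_of_zero_or_one (hmeas t f) (h01 t f)
  have hmin : Integrable (fun ω => min 1 (∑ t, ∑ f ∈ s, W t f ω)) μ :=
    ((integrable_const 1).sub (integrable_noSuccess hmeas h01 s)).congr
      (.of_forall fun ω => (min_one_sum_sum_eq_one_sub_noSuccess h01 s ω).symm)
  calc ∫ ω, min 1 (∑ t, ∑ f ∈ s, W t f ω) ∂μ ≤ ∫ ω, ∑ t, ∑ f ∈ s, W t f ω ∂μ :=
        integral_mono hmin (integrable_finsetSum _ fun t _ => integrable_finsetSum _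
          fun f _ => hint t f) fun ω => min_le_right _ _
    _ = ∑ t, ∑ f ∈ s, μ.real {ω | W t f ω = 1} := by
        simp only [integral_finsetSum _ fun t _ => integrable_finsetSum _ fun f _ => hint t f,
          integral_finsetSum _ fun f _ => hint _ f,
          integral_eq_measureReal_of_zero_or_one (hmeas _ _) (h01 _ _)]

variable [Fintype F]

lemma integral_noSuccess (hmeas : ∀ t f, Measurable (W t f))
    (h01 : ∀ t f ω, W t f ω = 0 ∨ W t f ω = 1)
    (hindep : iIndepFun (fun t ω => fun f => W t f ω) μ)
    (hone : ∀ᵐ ω ∂μ, ∀ t, ∑ f, W t f ω ≤ 1)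
    (s : Finset F) :
    ∫ ω, noSuccess W s ω ∂μ = ∏ t, (1 - ∑ f ∈ s, μ.real {ω | W t f ω = 1}) := by
  unfold noSuccess
  rw [hindep.integral_fun_prod_comp (f := fun _ v => ∏ f ∈ s, (1 - v f))
    (fun t => by fun_prop) (fun t => Measurable.aestronglyMeasurable (by fun_prop))]
  exact prod_congr rfl fun t _ => integral_prod_one_sub_of_sum_le_one (hmeas t) (h01 t)
    (hone.mono fun ω h => h t) s

lemma covariance_noSuccess_nonpos [DecidableEq F] (hmeas : ∀ t f, Measurable (W t f))
    (h01 : ∀ t f ω, W t f ω = 0 ∨ W t f ω = 1)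
    (hindep : iIndepFun (fun t ω => fun f => W t f ω) μ)
    (hone : ∀ᵐ ω ∂μ, ∀ t, ∑ f, W t f ω ≤ 1)
    {s s' : Finset F} (h : Disjoint s s') :
    cov[noSuccess W s, noSuccess W s'; μ] ≤ 0 := by
  have hL : ∀ s, MemLp (noSuccess W s) 2 μ := fun s =>
    memLp_of_zero_or_one (measurable_noSuccess hmeas s) (noSuccess_eq_zero_or_one h01 s) 2
  have hprod : μ[noSuccess W s * noSuccess W s'] = μ[noSuccess W (s ∪ s')] := by
    simp only [Pi.mul_apply, noSuccess_union h]
  rw [covariance_eq_sub (hL s) (hL s'), hprod, integral_noSuccess hmeas h01 hindep hone,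
    integral_noSuccess hmeas h01 hindep hone, integral_noSuccess hmeas h01 hindep hone,
    sub_nonpos]
  simp only [sum_union h]
  refine prod_one_sub_add_le_prod_mul_prod _ (fun t _ => sum_nonneg fun _ _ => measureReal_nonneg)
    (fun t _ => sum_nonneg fun _ _ => measureReal_nonneg) fun t _ => ?_
  rw [← sum_union h]
  exact sum_measureReal_le_one_of_sum_le_one (hmeas t) (h01 t) (hone.mono fun ω h => h t) _

end RoundProcess

/-- variance analysis of `SAMP(γ)`: in the round-process model
with `SAMP(γ)` marginals `P(W t f = 1) = γ x f t p f t`, `γ ∈ [0,1]`, let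
`H i := min 1 (∑_t ∑_{f:ι f=i} W t f)` be the number of successful assignments
involving offline agent `i` and `H := ∑ i, H i` the total number of successful
assignments.  Then each `H i` is `{0,1}`-valued with
`E[H i] = 1 - ∏_t (1 - γ ∑_{f:ι f=i} x f t p f t) ≤ γ`, and
`Var[H] ≤ γ̄(1-γ̄)·|I|` where `γ̄ := min (1/2) γ` (here `|I| = B`, the total
matching capacity). -/
theorem stmt_13 {Ω : Type*} [MeasureSpace Ω] [IsProbabilityMeasure (ℙ : Measure Ω)]
    {F I : Type*} [Fintype F] [Fintype I] [DecidableEq I]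
    (ι : F → I) (T : ℕ)
    (W : Fin T → F → Ω → ℝ)
    (hW01 : ∀ t f ω, W t f ω = 0 ∨ W t f ω = 1)
    (hWmeas : ∀ t f, Measurable (W t f))
    (hindep : iIndepFun
      (fun t ω => fun f => W t f ω) ℙ)
    (honce : ∀ᵐ ω ∂ℙ, ∀ t, ∑ f, W t f ω ≤ 1)
    (γ : ℝ) (hγ : γ ∈ Set.Icc (0 : ℝ) 1)
    (x p : F → Fin T → ℝ)
    (hx : ∀ f t, x f t ∈ Set.Icc (0 : ℝ) 1) (hp : ∀ f t, p f t ∈ Set.Icc (0 : ℝ) 1)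
    (hcap : ∀ i, ∑ t, ∑ f ∈ univ.filter (fun f => ι f = i), x f t * p f t ≤ 1)
    (hmarg : ∀ t f, ℙ {ω | W t f ω = 1} = ENNReal.ofReal (γ * x f t * p f t))
    (H : I → Ω → ℝ)
    (hH : ∀ i ω, H i ω = min 1 (∑ t, ∑ f ∈ univ.filter (fun f => ι f = i), W t f ω)) :
    (∀ i, (∀ ω, H i ω = 0 ∨ H i ω = 1) ∧
      (∫ ω, H i ω) =
        1 - ∏ t, (1 - γ * ∑ f ∈ univ.filter (fun f => ι f = i), x f t * p f t) ∧
      (∫ ω, H i ω) ≤ γ) ∧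
    variance (fun ω => ∑ i, H i ω) ℙ ≤
      min (1 / 2) γ * (1 - min (1 / 2) γ) * (Fintype.card I : ℝ) := by
  classical
  set Fi : I → Finset F := fun i => univ.filter (fun f => ι f = i)
  have hHS : ∀ i, H i = fun ω => 1 - noSuccess W (Fi i) ω := fun i =>
    funext fun ω => (hH i ω).trans (min_one_sum_sum_eq_one_sub_noSuccess hW01 _ ω)
  have hH01 : ∀ i ω, H i ω = 0 ∨ H i ω = 1 := fun i ω => by
    rcases noSuccess_eq_zero_or_one hW01 (Fi i) ω with h | h <;> simp [hHS, h]
  have hHmeas : ∀ i, Measurable (H i) := fun i => by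
    rw [hHS]; exact measurable_const.sub (measurable_noSuccess hWmeas _)
  have hprob : ∀ t f, (ℙ : Measure Ω).real {ω | W t f ω = 1} = γ * (x f t * p f t) :=
    fun t f => by
      rw [measureReal_def, hmarg, ENNReal.toReal_ofReal
        (mul_nonneg (mul_nonneg hγ.1 (hx f t).1) (hp f t).1), mul_assoc]
  have hmean : ∀ i, ∫ ω, H i ω = 1 - ∏ t, (1 - γ * ∑ f ∈ Fi i, x f t * p f t) := fun i => by
    rw [hHS, integral_sub (integrable_const 1) (integrable_noSuccess hWmeas hW01 _),
      integral_noSuccess hWmeas hW01 hindep honce]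
    simp only [integral_const, probReal_univ, one_smul, hprob, mul_sum]
  have hmean_le : ∀ i, ∫ ω, H i ω ≤ γ := fun i => calc
    ∫ ω, H i ω ≤ ∑ t, ∑ f ∈ Fi i, (ℙ : Measure Ω).real {ω | W t f ω = 1} :=
      (integral_congr_ae (.of_forall (hH i))).trans_le
        (integral_min_one_sum_sum_le hWmeas hW01 (Fi i))
    _ = γ * ∑ t, ∑ f ∈ Fi i, x f t * p f t := by simp only [hprob, mul_sum]
    _ ≤ γ := mul_le_of_le_one_right hγ.1 (hcap i)
  refine ⟨fun i => ⟨hH01 i, hmean i, hmean_le i⟩, ?_⟩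
  have hcov : Pairwise fun i j => cov[H i, H j; ℙ] ≤ 0 := fun i j (hij : i ≠ j) => by
    dsimp only
    rw [hHS i, hHS j, covariance_const_sub_left (integrable_noSuccess hWmeas hW01 _),
      covariance_const_sub_right (integrable_noSuccess hWmeas hW01 _), neg_neg]
    exact covariance_noSuccess_nonpos hWmeas hW01 hindep honce
      (disjoint_filter.2 fun f _ hi hj => hij (hi ▸ hj))
  calc Var[fun ω => ∑ i, H i ω; ℙ] ≤ ∑ i, Var[H i; ℙ] :=
        variance_sum_le_sum_variance (fun i => memLp_of_zero_or_one (hHmeas i) (hH01 i) 2) hcov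
    _ ≤ ∑ _i : I, min (1 / 2) γ * (1 - min (1 / 2) γ) := sum_le_sum fun i _ => by
        rw [variance_of_zero_or_one (hHmeas i) (hH01 i)]
        exact mul_one_sub_le_min_half _ _ (hmean_le i)
    _ = _ := by rw [sum_const, card_univ, nsmul_eq_mul, mul_comm]
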